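/- Let a_i = (c_i,c'_i,q_i,q'_i,m_i,m'_i) and b_i = (d_i,d'_i,p_i,p'_i,n_i,n'_i), i = 1,…,N, be elements of the twisted algebra. Then the diagonal twisted 1-form A_Y := Σ_i π(a_i)·[γ⁵⊗D_Y, π(b_i)]_ρ equals diag_C(A, 0), where A acts trivially on ṡ, is block diagonal in s, A = diag_s(A_r, A_l), and on each lepto-colour block I the 4×4 flavour matrices are A_r = [[0, conj(𝗄^I)·H₁],[H₂·𝗄^I, 0]] and A_l = −[[0, conj(𝗄^I)·H'₁],[H'₂·𝗄^I, 0]] (in 2×2 flavour-pair blocks), with H₁ := Σ_i 𝖼_i(p'_i − 𝖽'_i), H₂ := Σ_i q'_i(𝖽_i − p_i), H'₁ := Σ_i 𝖼'_i(p_i − 𝖽_i), H'₂ := Σ_i q_i(𝖽'_i − p'_i), where 𝖼_i := diag(c_i, conj(c_i)), 𝖼'_i := diag(c'_i, conj(c'_i)), 𝖽_i := diag(d_i, conj(d_i)), 𝖽'_i := diag(d'_i, conj(d'_i)). In particular H₁, H₂, H'₁, H'₂ are quaternionic matrices. -/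
import Mathlib


open Matrix

noncomputable section

namespace TwistSM

/-! ### Dirac matrices -/

def pauli1 : Matrix (Fin 2) (Fin 2) ℂ := !![0, 1; 1, 0]
def pauli2 : Matrix (Fin 2) (Fin 2) ℂ := !![0, -Complex.I; Complex.I, 0]
def pauli3 : Matrix (Fin 2) (Fin 2) ℂ := !![1, 0; 0, -1]

/-- σ^μ = (I₂, −iσ₁, −iσ₂, −iσ₃) -/
def sigE : Fin 4 → Matrix (Fin 2) (Fin 2) ℂ :=
  ![1, (-Complex.I) • pauli1, (-Complex.I) • pauli2, (-Complex.I) • pauli3]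
/-- σ̃^μ = (I₂, iσ₁, iσ₂, iσ₃) -/
def sigTE : Fin 4 → Matrix (Fin 2) (Fin 2) ℂ :=
  ![1, Complex.I • pauli1, Complex.I • pauli2, Complex.I • pauli3]

/-- Diagonal 2×2 block matrix [[A,0],[0,B]] over a leading `Fin 2` index. -/
def dgB {m : Type} (A B : Matrix m m ℂ) : Matrix (Fin 2 × m) (Fin 2 × m) ℂ :=
  Matrix.of fun p q =>
    if p.1 = q.1 then (if p.1 = 0 then A p.2 q.2 else B p.2 q.2) else 0

/-- Off-diagonal 2×2 block matrix [[0,A],[B,0]] over a leading `Fin 2` index. -/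
def odB {m : Type} (A B : Matrix m m ℂ) : Matrix (Fin 2 × m) (Fin 2 × m) ℂ :=
  Matrix.of fun p q =>
    if p.1 = 0 then (if q.1 = 0 then 0 else A p.2 q.2)
    else (if q.1 = 0 then B p.2 q.2 else 0)

/-- Euclidean Dirac matrices γ^μ_E = [[0, σ^μ],[σ̃^μ, 0]], acting on the spinor
indices (s, ṡ). -/
def gammaE (μ : Fin 4) : Matrix (Fin 2 × Fin 2) (Fin 2 × Fin 2) ℂ := odB (sigE μ) (sigTE μ)

/-- Entrywise complex conjugation of a matrix. -/
def mconj {m n : Type} (A : Matrix m n ℂ) : Matrix m n ℂ := A.map (starRingEnd ℂ)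

/-- C = i γ⁰_E γ²_E (the matrix part of the charge conjugation 𝒥 = C ∘ cc). -/
def Kspin : Matrix (Fin 2 × Fin 2) (Fin 2 × Fin 2) ℂ := Complex.I • (gammaE 0 * gammaE 2)

/-! ### The twisted algebra and its representation on ℂ¹²⁸ -/

/-- Quaternionic 2×2 matrices: of the form [[α,β],[−conj β, conj α]]. -/
def IsQuat (q : Matrix (Fin 2) (Fin 2) ℂ) : Prop :=
  q 1 0 = -(starRingEnd ℂ) (q 0 1) ∧ q 1 1 = (starRingEnd ℂ) (q 0 0)

/-- An element (c, c', q, q', m, m') of the twisted algebra. -/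
structure Alg : Type where
  c : ℂ
  c' : ℂ
  q : Matrix (Fin 2) (Fin 2) ℂ
  q' : Matrix (Fin 2) (Fin 2) ℂ
  m : Matrix (Fin 3) (Fin 3) ℂ
  m' : Matrix (Fin 3) (Fin 3) ℂ
  hq : IsQuat q
  hq' : IsQuat q'

/-- The twist ρ: exchange primed and unprimed entries. -/
def Alg.rho (a : Alg) : Alg := ⟨a.c', a.c, a.q', a.q, a.m', a.m, a.hq', a.hq⟩

/-- Flavour index α, as a pair (flavour pair, index within the pair):
(0,0) = 1̇, (0,1) = 2̇, (1,0) = 1, (1,1) = 2. -/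
abbrev Flav : Type := Fin 2 × Fin 2
/-- Internal index (I, α): lepto-colour I ∈ Fin 4 and flavour α. -/
abbrev Intl : Type := Fin 4 × Flav
/-- (ṡ, (I, α)) -/
abbrev HalfNoS : Type := Fin 2 × Intl
/-- Half of the full space: (s, ṡ, (I, α)). -/
abbrev Half : Type := Fin 2 × HalfNoS
/-- ℂ¹²⁸, indexed by (C, s, ṡ, (I, α)). -/
abbrev Full : Type := Fin 2 × Half

/-- diag(c, conj c) as a 2×2 matrix. -/
def cdiag (c : ℂ) : Matrix (Fin 2) (Fin 2) ℂ := Matrix.diagonal ![c, (starRingEnd ℂ) c]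

def pred3 (i : Fin 4) : Fin 3 := ⟨i.val - 1, by have := i.isLt; omega⟩

/-- diag(c, m) as a 4×4 matrix on the lepto-colour index. -/
def sm4 (c : ℂ) (m : Matrix (Fin 3) (Fin 3) ℂ) : Matrix (Fin 4) (Fin 4) ℂ :=
  Matrix.of fun i j =>
    if i = 0 then (if j = 0 then c else 0)
    else if j = 0 then 0 else m (pred3 i) (pred3 j)

/-- Q_r = diag(c, conj c, q') on the flavour index. -/
def Qr (a : Alg) : Matrix Flav Flav ℂ := dgB (cdiag a.c) a.q'
/-- Q_l = diag(c', conj c', q) on the flavour index. -/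
def Ql (a : Alg) : Matrix Flav Flav ℂ := dgB (cdiag a.c') a.q

/-- diag_α(A⊗I₂, B⊗I₂) on (I, α). -/
def msect (A B : Matrix (Fin 4) (Fin 4) ℂ) : Matrix Intl Intl ℂ :=
  Matrix.of fun p q =>
    if p.2 = q.2 then (if p.2.1 = 0 then A p.1 q.1 else B p.1 q.1) else 0

/-- M_r = diag_α(𝗆⊗I₂, 𝗆'⊗I₂). -/
def Mr (a : Alg) : Matrix Intl Intl ℂ := msect (sm4 a.c a.m) (sm4 a.c' a.m')
/-- M_l = diag_α(𝗆'⊗I₂, 𝗆⊗I₂). -/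
def Ml (a : Alg) : Matrix Intl Intl ℂ := msect (sm4 a.c' a.m') (sm4 a.c a.m)

/-- Lift a flavour matrix to (ṡ, (I, α)), acting trivially on ṡ and I. -/
def liftQ (X : Matrix Flav Flav ℂ) : Matrix HalfNoS HalfNoS ℂ :=
  Matrix.of fun p q => if p.1 = q.1 ∧ p.2.1 = q.2.1 then X p.2.2 q.2.2 else 0

/-- Lift a matrix on (I, α) to (ṡ, (I, α)), acting trivially on ṡ. -/
def liftI (X : Matrix Intl Intl ℂ) : Matrix HalfNoS HalfNoS ℂ :=
  Matrix.of fun p q => if p.1 = q.1 then X p.2 q.2 else 0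

/-- The Q-block of the representation: diag_s(Q_r, Q_l), trivial on ṡ and I. -/
def Qmat (a : Alg) : Matrix Half Half ℂ := dgB (liftQ (Qr a)) (liftQ (Ql a))
/-- The M-block of the representation: diag_s(M_r, M_l), trivial on ṡ. -/
def Mmat (a : Alg) : Matrix Half Half ℂ := dgB (liftI (Mr a)) (liftI (Ml a))

/-- The representation π(a) = diag_C(Q, M) of the twisted algebra on ℂ¹²⁸. -/
def rep (a : Alg) : Matrix Full Full ℂ := dgB (Qmat a) (Mmat a)

/-- Twisted commutator [T, π(b)]_ρ = T·π(b) − π(ρ(b))·T. -/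
def tcomm (T : Matrix Full Full ℂ) (b : Alg) : Matrix Full Full ℂ :=
  T * rep b - rep b.rho * T

/-- K = (i γ⁰_E γ²_E) ⊗ ξ ⊗ I₁₆ (with ξ on the internal index C);
the real structure is J = K ∘ cc. -/
def Kmat : Matrix Full Full ℂ :=
  Matrix.of fun p q =>
    (!![0, 1; 1, 0] : Matrix (Fin 2) (Fin 2) ℂ) p.1 q.1 *
      Kspin (p.2.1, p.2.2.1) (q.2.1, q.2.2.1) *
      (if p.2.2.2 = q.2.2.2 then 1 else 0)

/-- J T J⁻¹ = −K · conj(T) · conj(K) as a matrix operation. -/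
def Jconj (T : Matrix Full Full ℂ) : Matrix Full Full ℂ := -(Kmat * mconj T * mconj Kmat)

/-! ### Yukawa and Majorana parts of the Dirac operator -/

/-- 𝗄^I = diag(k_u^I, k_d^I). -/
def kdiag (kν ke ku kd : ℂ) (i : Fin 4) : Matrix (Fin 2) (Fin 2) ℂ :=
  if i = 0 then Matrix.diagonal ![kν, ke] else Matrix.diagonal ![ku, kd]

/-- Block-diagonal matrix on (I, α) from a family of flavour matrices. -/
def diagI (F : Fin 4 → Matrix Flav Flav ℂ) : Matrix Intl Intl ℂ :=
  Matrix.of fun p q => if p.1 = q.1 then F p.1 p.2 q.2 else 0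

/-- The Yukawa mass matrix D₀ = diag_I(D₀^I), D₀^I = [[0, conj 𝗄^I],[𝗄^I, 0]]. -/
def D0 (kν ke ku kd : ℂ) : Matrix Intl Intl ℂ :=
  diagI fun i => odB (mconj (kdiag kν ke ku kd i)) (kdiag kν ke ku kd i)

/-- η ⊗ X, with η = diag_s(1,−1) ⊗ I₂ on (s, ṡ) and X on (I, α). -/
def etaD (X : Matrix Intl Intl ℂ) : Matrix Half Half ℂ := dgB (liftI X) (liftI (-X))

/-- γ⁵ ⊗ D_Y = diag_C(η⊗D₀, η⊗D₀†). -/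
def g5DY (kν ke ku kd : ℂ) : Matrix Full Full ℂ :=
  dgB (etaD (D0 kν ke ku kd)) (etaD ((D0 kν ke ku kd)ᴴ))

/-- Ξ = diag(1,0,0,0)_I ⊗ diag(1,0,0,0)_α on (I, α). -/
def XiI : Matrix Intl Intl ℂ :=
  Matrix.of fun p q =>
    if p = q ∧ p.1 = 0 ∧ p.2 = ((0 : Fin 2), (0 : Fin 2)) then 1 else 0

/-- γ⁵ ⊗ D_M = [[0, η⊗D_R],[η⊗D_R†, 0]]_C with D_R = k_R Ξ. -/
def g5DM (kR : ℂ) : Matrix Full Full ℂ :=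
  odB (etaD (kR • XiI)) (etaD ((kR • XiI)ᴴ))

/-! ### The free 1-form -/

/-- Lift a spinor matrix (on (s, ṡ)) to ℂ¹²⁸, identity on C and (I, α). -/
def liftSpin (G : Matrix (Fin 2 × Fin 2) (Fin 2 × Fin 2) ℂ) : Matrix Full Full ℂ :=
  Matrix.of fun p q =>
    (if p.1 = q.1 ∧ p.2.2.2 = q.2.2.2 then 1 else 0) * G (p.2.1, p.2.2.1) (q.2.1, q.2.2.1)

/-- Q_μ = diag_s(Q^r_μ, Q^l_μ), Q^{r/l}_μ = diag(c^{r/l}, conj c^{r/l}, q^{r/l}),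
trivial on ṡ and I. -/
def freeQ (cr cl : ℂ) (qr ql : Matrix (Fin 2) (Fin 2) ℂ) : Matrix Half Half ℂ :=
  dgB (liftQ (dgB (cdiag cr) qr)) (liftQ (dgB (cdiag cl) ql))

/-- M_μ = diag_s(M^r_μ, M^l_μ), M^r_μ = diag_α(𝗆^r⊗I₂, 𝗆^l⊗I₂), 𝗆^{r/l} = diag(c^{r/l}, m^{r/l}),
trivial on ṡ. -/
def freeM (cr cl : ℂ) (mr ml : Matrix (Fin 3) (Fin 3) ℂ) : Matrix Half Half ℂ :=
  dgB (liftI (msect (sm4 cr mr) (sm4 cl ml))) (liftI (msect (sm4 cl ml) (sm4 cr mr)))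

/-- The free 1-form coefficient matrix A_μ = diag_C(Q_μ, M_μ). -/
def freeA (cr cl : ℂ) (qr ql : Matrix (Fin 2) (Fin 2) ℂ)
    (mr ml : Matrix (Fin 3) (Fin 3) ℂ) : Matrix Full Full ℂ :=
  dgB (freeQ cr cl qr ql) (freeM cr cl mr ml)

/-! ### Partial derivatives -/

/-- Partial derivative in the μ-th coordinate direction of ℝ⁴ (ℂ-valued). -/
def pdC (μ : Fin 4) (f : (Fin 4 → ℝ) → ℂ) (x : Fin 4 → ℝ) : ℂ :=
  fderiv ℝ f x (Pi.single μ 1)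

/-- Partial derivative in the μ-th coordinate direction of ℝ⁴ (ℝ-valued). -/
def pdR (μ : Fin 4) (f : (Fin 4 → ℝ) → ℝ) (x : Fin 4 → ℝ) : ℝ :=
  fderiv ℝ f x (Pi.single μ 1)

/-- Entrywise partial derivative of a matrix-valued function. -/
def pdM {m n : Type} (μ : Fin 4) (F : (Fin 4 → ℝ) → Matrix m n ℂ) (x : Fin 4 → ℝ) :
    Matrix m n ℂ :=
  Matrix.of fun i j => pdC μ (fun y => F y i j) x


/-! ### Auxiliary lemmas -/

section BlockAlgebra
variable {𝕞 : Type} [Fintype 𝕞]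

lemma dgB_mul (A B C D : Matrix 𝕞 𝕞 ℂ) : dgB A B * dgB C D = dgB (A*C) (B*D) := by
  ext ⟨i,p⟩ ⟨j,q⟩
  simp only [dgB, Matrix.mul_apply, Fintype.sum_prod_type, of_apply, Fin.sum_univ_two]
  fin_cases i <;> fin_cases j <;> simp

lemma odB_mul_dgB (A B C D : Matrix 𝕞 𝕞 ℂ) : odB A B * dgB C D = odB (A*D) (B*C) := by
  ext ⟨i,p⟩ ⟨j,q⟩
  simp only [dgB, odB, Matrix.mul_apply, Fintype.sum_prod_type, of_apply, Fin.sum_univ_two]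
  fin_cases i <;> fin_cases j <;> simp

lemma dgB_mul_odB (A B C D : Matrix 𝕞 𝕞 ℂ) : dgB C D * odB A B = odB (C*A) (D*B) := by
  ext ⟨i,p⟩ ⟨j,q⟩
  simp only [dgB, odB, Matrix.mul_apply, Fintype.sum_prod_type, of_apply, Fin.sum_univ_two]
  fin_cases i <;> fin_cases j <;> simp

end BlockAlgebra

section BlockLinear
variable {𝕞 : Type} (A B C D : Matrix 𝕞 𝕞 ℂ)

lemma dgB_sub : dgB A B - dgB C D = dgB (A-C) (B-D) := by
  ext ⟨i,p⟩ ⟨j,q⟩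
  simp only [dgB, Matrix.sub_apply, of_apply]
  split_ifs <;> simp

lemma odB_sub : odB A B - odB C D = odB (A-C) (B-D) := by
  ext ⟨i,p⟩ ⟨j,q⟩
  simp only [odB, Matrix.sub_apply, of_apply]
  split_ifs <;> simp

lemma odB_neg : -odB A B = odB (-A) (-B) := by
  ext ⟨i,p⟩ ⟨j,q⟩
  simp only [odB, Matrix.neg_apply, of_apply]
  split_ifs <;> simp

lemma dgB_zero : dgB (0 : Matrix 𝕞 𝕞 ℂ) 0 = 0 := by
  ext ⟨i,p⟩ ⟨j,q⟩
  simp only [dgB, of_apply, Matrix.zero_apply]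
  split_ifs <;> simp

lemma dgB_sum {ι : Type} (s : Finset ι) (f g : ι → Matrix 𝕞 𝕞 ℂ) :
    ∑ i ∈ s, dgB (f i) (g i) = dgB (∑ i ∈ s, f i) (∑ i ∈ s, g i) := by
  ext ⟨i,p⟩ ⟨j,q⟩
  simp only [dgB, Matrix.sum_apply, of_apply]
  split_ifs <;> simp

lemma odB_sum {ι : Type} (s : Finset ι) (f g : ι → Matrix 𝕞 𝕞 ℂ) :
    ∑ i ∈ s, odB (f i) (g i) = odB (∑ i ∈ s, f i) (∑ i ∈ s, g i) := by
  ext ⟨i,p⟩ ⟨j,q⟩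
  simp only [odB, Matrix.sum_apply, of_apply]
  split_ifs <;> simp

end BlockLinear

section Lifts

lemma liftI_mul (X Y : Matrix Intl Intl ℂ) : liftI X * liftI Y = liftI (X*Y) := by
  ext ⟨i,p⟩ ⟨j,q⟩
  simp only [liftI, Matrix.mul_apply, Fintype.sum_prod_type, of_apply, Fin.sum_univ_two]
  fin_cases i <;> fin_cases j <;> simp

lemma liftI_sub (X Y : Matrix Intl Intl ℂ) : liftI X - liftI Y = liftI (X - Y) := by
  ext ⟨i,p⟩ ⟨j,q⟩
  simp only [liftI, Matrix.sub_apply, of_apply]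
  split_ifs <;> simp

lemma liftI_neg (X : Matrix Intl Intl ℂ) : liftI (-X) = -liftI X := by
  ext ⟨i,p⟩ ⟨j,q⟩
  simp only [liftI, Matrix.neg_apply, of_apply]
  split_ifs <;> simp

lemma liftI_zero : liftI (0 : Matrix Intl Intl ℂ) = 0 := by
  ext ⟨i,p⟩ ⟨j,q⟩
  simp only [liftI, of_apply, Matrix.zero_apply]
  split_ifs <;> simp

lemma liftI_sum {ι : Type} (s : Finset ι) (f : ι → Matrix Intl Intl ℂ) :
    ∑ i ∈ s, liftI (f i) = liftI (∑ i ∈ s, f i) := by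
  ext ⟨i,p⟩ ⟨j,q⟩
  simp only [liftI, Matrix.sum_apply, of_apply]
  split_ifs <;> simp

lemma liftQ_eq (X : Matrix Flav Flav ℂ) : liftQ X = liftI (diagI fun _ => X) := by
  ext ⟨i,p⟩ ⟨j,q⟩
  simp only [liftQ, liftI, diagI, of_apply]
  by_cases h1 : i = j <;> by_cases h2 : p.1 = q.1 <;> simp [h1, h2]

lemma diagI_mul (F G : Fin 4 → Matrix Flav Flav ℂ) :
    diagI F * diagI G = diagI fun I => F I * G I := by
  ext ⟨I,α⟩ ⟨J,β⟩
  simp only [diagI, Matrix.mul_apply, Fintype.sum_prod_type, of_apply,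
    ite_mul, mul_ite, zero_mul, mul_zero]
  by_cases h : I = J
  · subst h; simp [Finset.sum_ite_eq' , Matrix.mul_apply]
  · simp [Finset.sum_ite_eq', h]

lemma diagI_sub (F G : Fin 4 → Matrix Flav Flav ℂ) :
    diagI F - diagI G = diagI fun I => F I - G I := by
  ext ⟨I,α⟩ ⟨J,β⟩
  simp only [diagI, Matrix.sub_apply, of_apply]
  split_ifs <;> simp

lemma diagI_sum {ι : Type} (s : Finset ι) (f : ι → Fin 4 → Matrix Flav Flav ℂ) :
    ∑ i ∈ s, diagI (f i) = diagI fun I => ∑ i ∈ s, f i I := by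
  ext ⟨I,α⟩ ⟨J,β⟩
  simp only [diagI, Matrix.sum_apply, of_apply]
  split_ifs <;> simp

end Lifts
section Yukawa
variable (kν ke ku kd : ℂ)

lemma kdiag_diagonal (i : Fin 4) :
    kdiag kν ke ku kd i = Matrix.diagonal (if i = 0 then ![kν, ke] else ![ku, kd]) := by
  by_cases h : i = 0 <;> simp [kdiag, h]

lemma mconj_diagonal (v : Fin 2 → ℂ) :
    mconj (Matrix.diagonal v) = Matrix.diagonal fun j => (starRingEnd ℂ) (v j) := by
  ext i j
  simp only [mconj, Matrix.map_apply, Matrix.diagonal, of_apply]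
  split_ifs <;> simp

lemma cdiag_comm_kdiag (c : ℂ) (i : Fin 4) :
    cdiag c * kdiag kν ke ku kd i = kdiag kν ke ku kd i * cdiag c := by
  rw [kdiag_diagonal, cdiag, Matrix.diagonal_mul_diagonal, Matrix.diagonal_mul_diagonal]
  ext i' j'
  simp [Matrix.diagonal, mul_comm]

lemma cdiag_comm_mconj_kdiag (c : ℂ) (i : Fin 4) :
    cdiag c * mconj (kdiag kν ke ku kd i) = mconj (kdiag kν ke ku kd i) * cdiag c := by
  rw [kdiag_diagonal, mconj_diagonal, cdiag, Matrix.diagonal_mul_diagonal,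
    Matrix.diagonal_mul_diagonal]
  ext i' j'
  simp [Matrix.diagonal, mul_comm]

lemma D0_herm : (D0 kν ke ku kd)ᴴ = D0 kν ke ku kd := by
  ext ⟨I,α⟩ ⟨J,β⟩
  simp only [Matrix.conjTranspose_apply, D0, diagI, odB, of_apply, kdiag_diagonal,
    mconj_diagonal]
  by_cases h : I = J
  · subst h
    obtain ⟨a1,a2⟩ := α; obtain ⟨b1,b2⟩ := β
    fin_cases a1 <;> fin_cases b1 <;> fin_cases a2 <;> fin_cases b2 <;>
      simp [Matrix.diagonal, eq_comm]
  · simp [h, Ne.symm h]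

end Yukawa
section Msector

lemma diagI_mul_msect (F : Fin 4 → Matrix Flav Flav ℂ) (A B : Matrix (Fin 4) (Fin 4) ℂ)
    (I J : Fin 4) (α β : Flav) :
    (diagI F * msect A B) (I,α) (J,β)
      = F I α β * (if β.1 = 0 then A I J else B I J) := by
  rw [Matrix.mul_apply, Finset.sum_eq_single ((I,β) : Intl)]
  · simp [diagI, msect]
  · rintro ⟨K,γ⟩ - hx
    by_cases hK : I = K
    · by_cases hγ : γ = β
      · exact absurd (by rw [hK, hγ]) hx
      · simp [msect, hγ]
    · simp [diagI, hK]
  · simp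

lemma msect_mul_diagI (F : Fin 4 → Matrix Flav Flav ℂ) (A B : Matrix (Fin 4) (Fin 4) ℂ)
    (I J : Fin 4) (α β : Flav) :
    (msect A B * diagI F) (I,α) (J,β)
      = (if α.1 = 0 then A I J else B I J) * F J α β := by
  rw [Matrix.mul_apply, Finset.sum_eq_single ((J,α) : Intl)]
  · simp [diagI, msect]
  · rintro ⟨K,γ⟩ - hx
    by_cases hγ : α = γ
    · by_cases hK : K = J
      · exact absurd (by rw [hK, hγ]) hx
      · simp [diagI, hK]
    · simp [msect, hγ]
  · simp

variable (kν ke ku kd : ℂ)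

lemma D0_mul_Mr (b : Alg) : D0 kν ke ku kd * Mr b = Ml b * D0 kν ke ku kd := by
  ext ⟨I,α⟩ ⟨J,β⟩
  rw [D0, Mr, Ml, diagI_mul_msect, msect_mul_diagI]
  by_cases hαβ : α.1 = β.1
  · simp [odB, hαβ]
    by_cases h : β.1 = 0 <;> simp [h, hαβ ▸ h]
  · have hkk : ∀ x y : ℂ, ∀ m' : Matrix (Fin 3) (Fin 3) ℂ,
        kdiag kν ke ku kd I α.2 β.2 * sm4 x m' I J
          = sm4 x m' I J * kdiag kν ke ku kd J α.2 β.2 := by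
      intro x y m'
      by_cases hI : I = 0 <;> by_cases hJ : J = 0 <;>
        simp [kdiag, sm4, hI, hJ, mul_comm]
    have hkk' : ∀ x y : ℂ, ∀ m' : Matrix (Fin 3) (Fin 3) ℂ,
        mconj (kdiag kν ke ku kd I) α.2 β.2 * sm4 x m' I J
          = sm4 x m' I J * mconj (kdiag kν ke ku kd J) α.2 β.2 := by
      intro x y m'
      by_cases hI : I = 0 <;> by_cases hJ : J = 0 <;>
        simp [kdiag, mconj, sm4, hI, hJ, mul_comm]
    by_cases h : α.1 = 0
    · have hb : ¬ β.1 = 0 := fun hh => hαβ (h.trans hh.symm)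
      simp only [odB, of_apply, h, hb, if_true, if_false]
      exact hkk' b.c' b.c' b.m'
    · have hb : β.1 = 0 := by omega
      simp only [odB, of_apply, h, hb, if_true, if_false]
      exact hkk b.c b.c b.m

lemma D0_mul_Ml (b : Alg) : D0 kν ke ku kd * Ml b = Mr b * D0 kν ke ku kd := by
  ext ⟨I,α⟩ ⟨J,β⟩
  rw [D0, Mr, Ml, diagI_mul_msect, msect_mul_diagI]
  by_cases hαβ : α.1 = β.1
  · simp [odB, hαβ]
    by_cases h : β.1 = 0 <;> simp [h, hαβ ▸ h]
  · have hkk : ∀ x : ℂ, ∀ m' : Matrix (Fin 3) (Fin 3) ℂ,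
        kdiag kν ke ku kd I α.2 β.2 * sm4 x m' I J
          = sm4 x m' I J * kdiag kν ke ku kd J α.2 β.2 := by
      intro x m'
      by_cases hI : I = 0 <;> by_cases hJ : J = 0 <;>
        simp [kdiag, sm4, hI, hJ, mul_comm]
    have hkk' : ∀ x : ℂ, ∀ m' : Matrix (Fin 3) (Fin 3) ℂ,
        mconj (kdiag kν ke ku kd I) α.2 β.2 * sm4 x m' I J
          = sm4 x m' I J * mconj (kdiag kν ke ku kd J) α.2 β.2 := by
      intro x m'
      by_cases hI : I = 0 <;> by_cases hJ : J = 0 <;>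
        simp [kdiag, mconj, sm4, hI, hJ, mul_comm]
    by_cases h : α.1 = 0
    · have hb : ¬ β.1 = 0 := fun hh => hαβ (h.trans hh.symm)
      simp only [odB, of_apply, h, hb, if_true, if_false]
      exact hkk' b.c b.m
    · have hb : β.1 = 0 := by omega
      simp only [odB, of_apply, h, hb, if_true, if_false]
      exact hkk b.c' b.m'

end Msector
section Qsector

lemma comm_sub_left (K C D X : Matrix (Fin 2) (Fin 2) ℂ)
    (h1 : C * K = K * C) (h2 : D * K = K * D) :
    C * (K * X - D * K) = K * (C * (X - D)) := by
  have a1 : C * (K * X) = K * (C * X) := by rw [← mul_assoc, h1, mul_assoc]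
  have a2 : C * (D * K) = K * (C * D) := by
    rw [h2, ← mul_assoc, h1, mul_assoc]
  rw [mul_sub, a1, a2, ← mul_sub, mul_sub C X D]

lemma comm_sub_right (K C D X : Matrix (Fin 2) (Fin 2) ℂ)
    (h1 : C * K = K * C) :
    X * (K * C - D * K) = (X * (C - D)) * K := by
  rw [mul_sub, ← h1, ← mul_assoc, ← mul_assoc, ← sub_mul, ← mul_sub]

lemma flav_key (kν ke ku kd : ℂ) (I : Fin 4) (ca cb cb' : ℂ)
    (qa qb qb' : Matrix (Fin 2) (Fin 2) ℂ) :
    dgB (cdiag ca) qa *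
      (odB (mconj (kdiag kν ke ku kd I)) (kdiag kν ke ku kd I) * dgB (cdiag cb) qb
        - dgB (cdiag cb') qb' * odB (mconj (kdiag kν ke ku kd I)) (kdiag kν ke ku kd I))
    = odB (mconj (kdiag kν ke ku kd I) * (cdiag ca * (qb - cdiag cb')))
        ((qa * (cdiag cb - qb')) * kdiag kν ke ku kd I) := by
  rw [odB_mul_dgB, dgB_mul_odB, odB_sub, dgB_mul_odB,
    comm_sub_left _ _ _ qb (cdiag_comm_mconj_kdiag kν ke ku kd ca I)
      (cdiag_comm_mconj_kdiag kν ke ku kd cb' I),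
    comm_sub_right _ _ _ qa (cdiag_comm_kdiag kν ke ku kd cb I)]

lemma diagI_neg (F : Fin 4 → Matrix Flav Flav ℂ) : -diagI F = diagI fun I => -(F I) := by
  ext ⟨I,α⟩ ⟨J,β⟩
  simp only [diagI, Matrix.neg_apply, of_apply]
  split_ifs <;> simp

end Qsector

section Summand

lemma Mr_rho (b : Alg) : Mr b.rho = Ml b := rfl
lemma Ml_rho (b : Alg) : Ml b.rho = Mr b := rfl
lemma Qr_rho (b : Alg) : Qr b.rho = Ql b := rfl
lemma Ql_rho (b : Alg) : Ql b.rho = Qr b := rfl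

lemma rep_tcomm (kν ke ku kd : ℂ) (a b : Alg) :
    rep a * tcomm (g5DY kν ke ku kd) b =
      dgB (dgB
        (liftI (diagI fun I =>
          odB (mconj (kdiag kν ke ku kd I) * (cdiag a.c * (b.q' - cdiag b.c')))
              ((a.q' * (cdiag b.c - b.q)) * kdiag kν ke ku kd I)))
        (liftI (diagI fun I =>
          -odB (mconj (kdiag kν ke ku kd I) * (cdiag a.c' * (b.q - cdiag b.c)))
              ((a.q * (cdiag b.c' - b.q')) * kdiag kν ke ku kd I))))
        0 := by
  rw [tcomm, rep, rep, rep, g5DY, dgB_mul, dgB_mul, dgB_sub, dgB_mul, D0_herm]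
  -- M sector vanishes
  have hM : Mmat a * (etaD (D0 kν ke ku kd) * Mmat b
      - Mmat b.rho * etaD (D0 kν ke ku kd)) = 0 := by
    rw [Mmat, Mmat, Mmat, etaD, Mr_rho, Ml_rho, dgB_mul, dgB_mul, dgB_sub,
      liftI_mul, liftI_mul, liftI_mul, liftI_mul, liftI_sub, liftI_sub,
      D0_mul_Mr]
    have h2 : -D0 kν ke ku kd * Ml b - Mr b * -D0 kν ke ku kd = 0 := by
      rw [neg_mul, mul_neg, sub_neg_eq_add, neg_add_eq_sub, D0_mul_Ml, sub_self]
    rw [h2, sub_self, liftI_zero, dgB_zero, mul_zero]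
  rw [hM]
  -- Q sector
  have hQ : Qmat a * (etaD (D0 kν ke ku kd) * Qmat b - Qmat b.rho * etaD (D0 kν ke ku kd))
      = dgB
        (liftI (diagI fun I =>
          odB (mconj (kdiag kν ke ku kd I) * (cdiag a.c * (b.q' - cdiag b.c')))
              ((a.q' * (cdiag b.c - b.q)) * kdiag kν ke ku kd I)))
        (liftI (diagI fun I =>
          -odB (mconj (kdiag kν ke ku kd I) * (cdiag a.c' * (b.q - cdiag b.c)))
              ((a.q * (cdiag b.c' - b.q')) * kdiag kν ke ku kd I))) := by
    rw [Qmat, Qmat, Qmat, etaD, Qr_rho, Ql_rho, Qr, Ql, Qr, Ql,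
      liftQ_eq, liftQ_eq, liftQ_eq, liftQ_eq, dgB_mul, dgB_mul, dgB_sub, dgB_mul]
    simp only [liftI_mul, liftI_sub]
    rw [D0]
    simp only [diagI_neg, diagI_mul, diagI_sub]
    refine congrArg₂ dgB ?_ ?_ <;>
      refine congrArg liftI (congrArg diagI (funext fun I => ?_))
    · exact flav_key kν ke ku kd I a.c b.c b.c' a.q' b.q' b.q
    · have key : ∀ X Y Z W : Matrix Flav Flav ℂ,
          X * (-Y * Z - W * -Y) = -(X * (Y * Z - W * Y)) := by
        intro X Y Z W
        rw [neg_mul, mul_neg, sub_neg_eq_add, neg_add_eq_sub, ← neg_sub, mul_neg]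
      rw [key, flav_key kν ke ku kd I a.c' b.c' b.c a.q b.q b.q']
  rw [hQ]

end Summand
section Quat

lemma IsQuat_cdiag (c : ℂ) : IsQuat (cdiag c) := by
  constructor <;> simp [cdiag, Matrix.diagonal]

lemma IsQuat.sub {A B : Matrix (Fin 2) (Fin 2) ℂ} (hA : IsQuat A) (hB : IsQuat B) :
    IsQuat (A - B) := by
  constructor <;> simp [Matrix.sub_apply, hA.1, hA.2, hB.1, hB.2] <;> ring_nf

lemma IsQuat.mul {A B : Matrix (Fin 2) (Fin 2) ℂ} (hA : IsQuat A) (hB : IsQuat B) :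
    IsQuat (A * B) := by
  constructor <;>
    simp only [Matrix.mul_apply, Fin.sum_univ_two, hA.1, hA.2, hB.1, hB.2, map_add,
      RingHom.map_mul, Complex.conj_conj, map_neg] <;> ring

lemma IsQuat_sum {ι : Type} (s : Finset ι) (f : ι → Matrix (Fin 2) (Fin 2) ℂ)
    (h : ∀ i ∈ s, IsQuat (f i)) : IsQuat (∑ i ∈ s, f i) := by
  constructor
  · rw [Matrix.sum_apply, Matrix.sum_apply, map_sum, ← Finset.sum_neg_distrib]
    exact Finset.sum_congr rfl fun i hi => (h i hi).1
  · rw [Matrix.sum_apply, Matrix.sum_apply, map_sum]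
    exact Finset.sum_congr rfl fun i hi => (h i hi).2

end Quat
/-- the diagonal twisted 1-form A_Y = Σᵢ π(aᵢ)·[γ⁵⊗D_Y, π(bᵢ)]_ρ equals
diag_C(A, 0), A = diag_s(A_r, A_l) trivial on ṡ, with on each lepto-colour block I
A_r = [[0, conj(𝗄^I)H₁],[H₂𝗄^I, 0]], A_l = −[[0, conj(𝗄^I)H'₁],[H'₂𝗄^I, 0]];
moreover H₁, H₂, H'₁, H'₂ are quaternionic. -/
theorem statement5 (N : ℕ) (a b : Fin N → Alg) (kν ke ku kd : ℂ) :
    let H1 : Matrix (Fin 2) (Fin 2) ℂ := ∑ i, cdiag (a i).c * ((b i).q' - cdiag (b i).c')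
    let H2 : Matrix (Fin 2) (Fin 2) ℂ := ∑ i, (a i).q' * (cdiag (b i).c - (b i).q)
    let H1' : Matrix (Fin 2) (Fin 2) ℂ := ∑ i, cdiag (a i).c' * ((b i).q - cdiag (b i).c)
    let H2' : Matrix (Fin 2) (Fin 2) ℂ := ∑ i, (a i).q * (cdiag (b i).c' - (b i).q')
    (∑ i, rep (a i) * tcomm (g5DY kν ke ku kd) (b i))
      = dgB (dgB
          (liftI (diagI fun I =>
            odB (mconj (kdiag kν ke ku kd I) * H1) (H2 * kdiag kν ke ku kd I)))
          (liftI (diagI fun I =>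
            -odB (mconj (kdiag kν ke ku kd I) * H1') (H2' * kdiag kν ke ku kd I))))
          (0 : Matrix Half Half ℂ) ∧
    IsQuat H1 ∧ IsQuat H2 ∧ IsQuat H1' ∧ IsQuat H2' := by
  intro H1 H2 H1' H2'
  refine ⟨?_, ?_, ?_, ?_, ?_⟩
  · rw [Finset.sum_congr rfl fun i _ => rep_tcomm kν ke ku kd (a i) (b i),
      dgB_sum, Finset.sum_const_zero, dgB_sum, liftI_sum, liftI_sum, diagI_sum, diagI_sum]
    refine congrArg₂ dgB (congrArg₂ dgB ?_ ?_) rfl <;>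
      refine congrArg liftI (congrArg diagI (funext fun I => ?_))
    · rw [odB_sum, ← Finset.mul_sum, ← Finset.sum_mul]
    · rw [Finset.sum_neg_distrib, odB_sum, ← Finset.mul_sum, ← Finset.sum_mul]
  · exact IsQuat_sum _ _ fun i _ =>
      (IsQuat_cdiag _).mul (((b i).hq').sub (IsQuat_cdiag _))
  · exact IsQuat_sum _ _ fun i _ =>
      ((a i).hq').mul ((IsQuat_cdiag _).sub (b i).hq)
  · exact IsQuat_sum _ _ fun i _ =>
      (IsQuat_cdiag _).mul (((b i).hq).sub (IsQuat_cdiag _))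
  · exact IsQuat_sum _ _ fun i _ =>
      ((a i).hq).mul ((IsQuat_cdiag _).sub (b i).hq')


end TwistSM
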